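/- Let B be a unital C*-algebra and let x, y ∈ B be invertible. Then for every tracial state τ on B, τ(log|xy|) = τ(log|x|) + τ(log|y|). -/

import Mathlib

/- Scaffolding for formalizing "Polar decomposition in algebraic K-theory"
   (Sarkowicz–Tikuisis). -/

open scoped ComplexOrder
open MeasureTheory Topology

noncomputable section

namespace PolarKTheory

variable (A : Type*) [CStarAlgebra A]

/-- A tracial state on a unital C*-algebra: a positive linear functional of norm one
(equivalently, unital) which is tracial. -/
structure TracialState where
  toFun : A →L[ℂ] ℂ
  map_one' : toFun 1 = 1
  pos' : ∀ a : A, 0 ≤ toFun (star a * a)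
  tracial' : ∀ a b : A, toFun (a * b) = toFun (b * a)
  norm_one' : ‖toFun‖ = 1

/-- The weak-* topology on the tracial state space `T(A)`. -/
instance : TopologicalSpace (TracialState A) :=
  TopologicalSpace.induced (fun τ => (τ.toFun : A → ℂ)) inferInstance

variable {A}

/-- For `a ∈ A`, the function `â : T(A) → ℝ`, `â(τ) = Re τ(a)`, as a bounded continuous
function.  (For self-adjoint `a` this is the canonical image of `a` in `Aff T(A)`.) -/
def hatBCF (a : A) : BoundedContinuousFunction (TracialState A) ℝ :=
  BoundedContinuousFunction.mkOfBound
    ⟨fun τ => (τ.toFun a).re, by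
      exact Complex.continuous_re.comp ((continuous_apply a).comp continuous_induced_dom)⟩
    (2 * ‖a‖)
    (by
      intro τ σ
      have key : ∀ ρ : TracialState A, |(ρ.toFun a).re| ≤ ‖a‖ := by
        intro ρ
        calc |(ρ.toFun a).re| ≤ ‖ρ.toFun a‖ := Complex.abs_re_le_norm _
          _ = ‖ρ.toFun a‖ := rfl
          _ ≤ ‖ρ.toFun‖ * ‖a‖ := ρ.toFun.le_opNorm a
          _ = ‖a‖ := by rw [ρ.norm_one', one_mul]
      have h1 := key τ
      have h2 := key σ
      have h3 : dist ((τ.toFun a).re) ((σ.toFun a).re) ≤ |(τ.toFun a).re| + |(σ.toFun a).re| := by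
        rw [Real.dist_eq]; exact abs_sub _ _
      show dist ((τ.toFun a).re) ((σ.toFun a).re) ≤ 2 * ‖a‖
      linarith)

variable (A)

/-- `Aff T(A)`, realized as the additive group of all functions `T(A) → ℝ` of the form `â`
for a self-adjoint `a ∈ A` (every continuous affine function on `T(A)` arises this way),
inside the normed group of bounded continuous functions with the uniform norm. -/
def AffT : AddSubgroup (BoundedContinuousFunction (TracialState A) ℝ) where
  carrier := {f | ∃ a : A, IsSelfAdjoint a ∧ f = hatBCF a}
  add_mem' := by
    rintro f g ⟨a, ha, rfl⟩ ⟨b, hb, rfl⟩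
    refine ⟨a + b, ha.add hb, ?_⟩
    ext τ
    show (τ.toFun a).re + (τ.toFun b).re = (τ.toFun (a + b)).re
    rw [map_add, Complex.add_re]
  zero_mem' := by
    refine ⟨0, IsSelfAdjoint.zero A, ?_⟩
    ext τ
    show (0 : ℝ) = (τ.toFun 0).re
    rw [map_zero]
    simp
  neg_mem' := by
    rintro f ⟨a, ha, rfl⟩
    refine ⟨-a, ha.neg, ?_⟩
    ext τ
    show -(τ.toFun a).re = (τ.toFun (-a)).re
    rw [map_neg, Complex.neg_re]

variable {A}

open scoped Classical in
/-- The element `â` of `Aff T(A)` attached to an element of `A` (junk value `0` if the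
corresponding function does not lie in `Aff T(A)`; for self-adjoint `a` it always does). -/
def affHat (a : A) : ↥(AffT A) :=
  if h : hatBCF a ∈ AffT A then ⟨hatBCF a, h⟩ else 0

variable (A)

/-- The closed linear span `cl[A,A]` of the additive commutators in `A`. -/
def clComm : Submodule ℂ A :=
  (Submodule.span ℂ {x : A | ∃ a b : A, x = a * b - b * a}).topologicalClosure

instance : IsClosed ((clComm A : Submodule ℂ A) : Set A) :=
  Submodule.isClosed_topologicalClosure _

/-- The codomain `A/cl[A,A]` of the universal trace. -/
abbrev TrTarget := A ⧸ clComm A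

/-- The universal trace `Tr : A → A/cl[A,A]`. -/
def trQ : A → TrTarget A := Submodule.Quotient.mk

/-- `n × n` matrices over `A`. -/
abbrev Mat (n : ℕ) := Matrix (Fin n) (Fin n) A

/-- `GL_n(A)`. -/
abbrev GLn (n : ℕ) := (Mat A n)ˣ

/-- `U_n(A)`. -/
abbrev Un (n : ℕ) := ↥(unitary (Mat A n))

/-- The unnormalized trace of a matrix: the sum of its diagonal entries. -/
def matTr {n : ℕ} (x : Mat A n) : A := ∑ i, x i i

/-- Entrywise derivative of a path of matrices. -/
def pathDeriv {n : ℕ} (ξ : ℝ → Mat A n) (t : ℝ) : Mat A n :=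
  fun i j => deriv (fun s => ξ s i j) t

variable {A}

/-- A piecewise-smooth path in `GL_n(A)`: continuous on `[0,1]`, with invertible values,
and (entrywise) differentiable off a finite set. -/
structure IsPWSmooth {n : ℕ} (ξ : ℝ → Mat A n) : Prop where
  continuousOn : ContinuousOn ξ (Set.Icc 0 1)
  isUnit : ∀ t ∈ Set.Icc (0 : ℝ) 1, IsUnit (ξ t)
  piecewise : ∃ s : Finset ℝ, ∀ t ∈ Set.Icc (0 : ℝ) 1, t ∉ s →
    ∀ i j, DifferentiableAt ℝ (fun u => ξ u i j) t

variable (A)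

/-- The pre-determinant `Δ̃ⁿ(ξ) = (2πi)⁻¹ ∫₀¹ Tr(ξ'(t) ξ(t)⁻¹) dt ∈ A/cl[A,A]`. -/
def predet {n : ℕ} (ξ : ℝ → Mat A n) : TrTarget A :=
  (2 * (Real.pi : ℂ) * Complex.I)⁻¹ •
    ∫ t in (0 : ℝ)..1, trQ A (matTr A (pathDeriv A ξ t * Ring.inverse (ξ t)))

/-- The set of values of the pre-determinant on piecewise-smooth loops at `1` in `GL_n⁰(A)`. -/
def loopSetGL (n : ℕ) : Set (TrTarget A) :=
  {v | ∃ ξ : ℝ → Mat A n, IsPWSmooth ξ ∧ ξ 0 = 1 ∧ ξ 1 = 1 ∧ predet A ξ = v}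

/-- `Δ̃ⁿ(π₁(GL_n⁰(A)))` as an additive subgroup of `A/cl[A,A]`. -/
def loopSubGL (n : ℕ) : AddSubgroup (TrTarget A) := AddSubgroup.closure (loopSetGL A n)

/-- The set of values of the pre-determinant on piecewise-smooth loops at `1` in `U_n⁰(A)`. -/
def loopSetU (n : ℕ) : Set (TrTarget A) :=
  {v | ∃ ξ : ℝ → Mat A n, IsPWSmooth ξ ∧ (∀ t ∈ Set.Icc (0 : ℝ) 1, ξ t ∈ unitary (Mat A n)) ∧
    ξ 0 = 1 ∧ ξ 1 = 1 ∧ predet A ξ = v}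

/-- `Δ̃ⁿ(π₁(U_n⁰(A)))` as an additive subgroup of `A/cl[A,A]`. -/
def loopSubU (n : ℕ) : AddSubgroup (TrTarget A) := AddSubgroup.closure (loopSetU A n)

/-- The codomain `(A/cl[A,A])/Δ̃ⁿ(π₁(GL_n⁰(A)))` of the de la Harpe–Skandalis determinant. -/
abbrev DetTarget (n : ℕ) := TrTarget A ⧸ loopSubGL A n

open scoped Classical in
/-- The de la Harpe–Skandalis determinant `Δⁿ` on `GL_n⁰(A)`: the class of `Δ̃ⁿ(ξ)` for a
(chosen) piecewise-smooth path `ξ` from `1` to `x` (junk value `0` if there is no such path,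
i.e. if `x ∉ GL_n⁰(A)`).  By [dlHS84, Lemme 1] this does not depend on the choice of path. -/
def Det {n : ℕ} (x : Mat A n) : DetTarget A n :=
  if h : ∃ ξ : ℝ → Mat A n, IsPWSmooth ξ ∧ ξ 0 = 1 ∧ ξ 1 = x
  then QuotientAddGroup.mk (predet A h.choose) else 0

/-- The square root of a positive matrix over `A`, defined entrywise by the integral
formula `√p = π⁻¹ ∫₀^∞ t^{-1/2} p (p+t)⁻¹ dt`. -/
def matSqrt {n : ℕ} (p : Mat A n) : Mat A n :=
  fun i j => (Real.pi : ℂ)⁻¹ •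
    ∫ t in Set.Ioi (0 : ℝ), (Real.sqrt t)⁻¹ • ((p * Ring.inverse (p + (t : ℂ) • 1)) i j)

/-- The "matrix absolute value" `|x| = (x*x)^{1/2}`. -/
def matAbs {n : ℕ} (x : Mat A n) : Mat A n := matSqrt A (star x * x)

/-- The matrix logarithm `log |x| = ½ log(x*x)`, defined entrywise by the integral formula
`log p = ∫₀¹ (p-1)(1+t(p-1))⁻¹ dt` applied to `p = x*x`. -/
def logAbs {n : ℕ} (x : Mat A n) : Mat A n :=
  fun i j => (2 : ℂ)⁻¹ •
    ∫ t in (0 : ℝ)..1,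
      (((star x * x - 1) * Ring.inverse (1 + (t : ℂ) • (star x * x - 1))) i j)

/-- The element `\widehat{log |x|}` of `Aff T(A)`, i.e. `τ ↦ (tr_n ⊗ τ)(log|x|)`. -/
def affLog {n : ℕ} (x : Mat A n) : ↥(AffT A) := affHat (matTr A (logAbs A x))

/-- The scalar `a ∈ A` viewed as the `n × n` matrix `a ⊕ 0_{n-1}` (so that
`e^{a ⊕ 0} = e^a ⊕ 1_{n-1}`, matching the embedding `GL_1(A) → GL_n(A)`). -/
def scalarMat (n : ℕ) (a : A) : Mat A n :=
  Matrix.diagonal (fun i => if (i : ℕ) = 0 then a else 0)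

open scoped Classical in
/-- The exponential `e^x ∈ GL_n(A)` of a matrix, as a unit (junk value `1` if `e^x` were
not invertible, which never happens). -/
def expGL {n : ℕ} (x : Mat A n) : GLn A n :=
  if h : IsUnit (NormedSpace.exp x) then h.unit else 1

open scoped Classical in
/-- An invertible matrix, promoted to an element of `GL_n(A)` (junk value `1` if it is
not invertible). -/
def unitOfMat {n : ℕ} (x : Mat A n) : GLn A n := if h : IsUnit x then h.unit else 1

/-- Zero-padding embedding `M_m(A) → M_N(A)`, `x ↦ x ⊕ 0`. -/
def padTo {m : ℕ} (N : ℕ) (x : Mat A m) : Mat A N := fun i j =>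
  if hi : (i : ℕ) < m then if hj : (j : ℕ) < m then x ⟨i, hi⟩ ⟨j, hj⟩ else 0 else 0

/-- The identity component `GL_n⁰(A)`, as a (normal) subgroup of `GL_n(A)`.  (The connected
component of the identity in a topological group is a normal subgroup; we take the normal
closure of the connected component, which equals it.) -/
def GLcomp0 (n : ℕ) : Subgroup (GLn A n) :=
  Subgroup.normalClosure (connectedComponent (1 : GLn A n))

instance GLcomp0_normal (n : ℕ) : (GLcomp0 A n).Normal := Subgroup.normalClosure_normal
/-- The identity component `U_n⁰(A)` as a subgroup of `U_n(A)`. -/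
def Ucomp0 (n : ℕ) : Subgroup (Un A n) :=
  Subgroup.normalClosure (connectedComponent (1 : Un A n))

instance Ucomp0_normal (n : ℕ) : (Ucomp0 A n).Normal := Subgroup.normalClosure_normal
/-- `ker Δⁿ`, i.e. the set of `x ∈ GL_n⁰(A)` whose determinant vanishes, described via
pre-determinants of paths; we take the normal closure (the kernel is a normal subgroup
of `GL_n(A)`, so this equals the kernel). -/
def kerDet (n : ℕ) : Subgroup (GLn A n) :=
  Subgroup.normalClosure
    {x : GLn A n | ∃ ξ : ℝ → Mat A n, IsPWSmooth ξ ∧ ξ 0 = 1 ∧ ξ 1 = Units.val x ∧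
      predet A ξ ∈ loopSubGL A n}

instance kerDet_normal (n : ℕ) : (kerDet A n).Normal := Subgroup.normalClosure_normal
/-- `ker (Δⁿ|_{U_n⁰(A)})` as a subgroup of `U_n(A)`. -/
def kerDetU (n : ℕ) : Subgroup (Un A n) :=
  Subgroup.normalClosure
    {u : Un A n | ∃ ξ : ℝ → Mat A n, IsPWSmooth ξ ∧ ξ 0 = 1 ∧ ξ 1 = Subtype.val u ∧
      predet A ξ ∈ loopSubGL A n}

instance kerDetU_normal (n : ℕ) : (kerDetU A n).Normal := Subgroup.normalClosure_normal
/-- The closure of the derived subgroup of `GL_n⁰(A)`, i.e. `CGL_n⁰(A)`, as a normal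
subgroup of `GL_n(A)` (the closure of the derived subgroup is a normal subgroup, so the
normal closure below equals it). -/
def CGL0 (n : ℕ) : Subgroup (GLn A n) :=
  Subgroup.normalClosure (closure ((⁅GLcomp0 A n, GLcomp0 A n⁆ : Subgroup (GLn A n)) : Set (GLn A n)))

instance CGL0_normal (n : ℕ) : (CGL0 A n).Normal := Subgroup.normalClosure_normal
/-- `CU_n⁰(A)` as a subgroup of `U_n(A)`. -/
def CU0 (n : ℕ) : Subgroup (Un A n) :=
  Subgroup.normalClosure (closure ((⁅Ucomp0 A n, Ucomp0 A n⁆ : Subgroup (Un A n)) : Set (Un A n)))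

instance CU0_normal (n : ℕ) : (CU0 A n).Normal := Subgroup.normalClosure_normal
section Limit

/-- The ambient algebra in which the direct limits `GL_∞(A)` and `U_∞(A)` are realized:
(`ℂ`-linear) endomorphisms of `⊕_ℕ A`-like sequence space `ℕ → A`. -/
abbrev EndA := Module.End ℂ (ℕ → A)

/-- The unital multiplicative embedding `M_n(A) → End(ℕ → A)`: a matrix acts on the first
`n` coordinates and as the identity on the rest (this realizes the connecting maps
`x ↦ x ⊕ 1`). -/
def toEndFun {n : ℕ} (x : Mat A n) : EndA A where
  toFun f := fun i => if h : i < n then ∑ j : Fin n, x ⟨i, h⟩ j * f j else f i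
  map_add' f g := by
    funext i
    by_cases h : i < n
    · simp [h, mul_add, Finset.sum_add_distrib]
    · simp [h]
  map_smul' c f := by
    funext i
    by_cases h : i < n
    · simp [h, Finset.smul_sum, mul_smul_comm]
    · simp [h]

/-- `toEndFun` as a multiplicative monoid homomorphism. -/
def toEnd (n : ℕ) : Mat A n →* EndA A where
  toFun := toEndFun A
  map_one' := by
    apply LinearMap.ext
    intro f
    funext i
    by_cases h : i < n
    · simp [toEndFun, h, Matrix.one_apply]
    · simp [toEndFun, h]
  map_mul' x y := by
    apply LinearMap.ext
    intro f
    funext i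
    rw [Module.End.mul_apply]
    simp only [toEndFun, LinearMap.coe_mk, AddHom.coe_mk]
    by_cases h : i < n
    · simp only [h, dif_pos, Matrix.mul_apply, Finset.sum_mul, Fin.is_lt, Fin.eta,
        Finset.mul_sum, mul_assoc]
      exact Finset.sum_comm
    · simp [h]

/-- The embedding `GL_n(A) → (End(ℕ → A))ˣ`. -/
def glEmbed (n : ℕ) : GLn A n →* (EndA A)ˣ := Units.map (toEnd A n)

/-- The embedding `U_n(A) → (End(ℕ → A))ˣ`. -/
def uEmbed (n : ℕ) : Un A n →* (EndA A)ˣ := (glEmbed A n).comp Unitary.toUnits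

/-- `GL_∞(A) = lim GL_n(A)`, realized as the subgroup of `(End(ℕ → A))ˣ` generated by
(equivalently: equal to) the union of the images of the `GL_n(A)`. -/
def GLinf : Subgroup (EndA A)ˣ := Subgroup.closure (⋃ n, Set.range (glEmbed A n))

/-- `U_∞(A) = lim U_n(A)`. -/
def Uinf : Subgroup (EndA A)ˣ := Subgroup.closure (⋃ n, Set.range (uEmbed A n))

lemma Uinf_le_GLinf : Uinf A ≤ GLinf A := by
  apply Subgroup.closure_mono
  refine Set.iUnion_mono fun n => ?_
  rintro _ ⟨u, rfl⟩
  exact ⟨Unitary.toUnits u, rfl⟩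

/-- The canonical map `GL_n(A) → GL_∞(A)`. -/
def glLevel (n : ℕ) : GLn A n →* ↥(GLinf A) :=
  (glEmbed A n).codRestrict (GLinf A)
    (fun x => Subgroup.subset_closure (Set.mem_iUnion.2 ⟨n, ⟨x, rfl⟩⟩))

/-- The canonical map `U_n(A) → U_∞(A)`. -/
def uLevel (n : ℕ) : Un A n →* ↥(Uinf A) :=
  (uEmbed A n).codRestrict (Uinf A)
    (fun x => Subgroup.subset_closure (Set.mem_iUnion.2 ⟨n, ⟨x, rfl⟩⟩))

/-- The inclusion `U_∞(A) → GL_∞(A)`. -/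
def uinfToGLinf : ↥(Uinf A) →* ↥(GLinf A) := Subgroup.inclusion (Uinf_le_GLinf A)

/-- The inductive limit topology on `GL_∞(A)`: the final topology induced by the canonical
maps `GL_n(A) → GL_∞(A)`. -/
instance : TopologicalSpace ↥(GLinf A) :=
  ⨆ n, TopologicalSpace.coinduced (glLevel A n) inferInstance

/-- The inductive limit topology on `U_∞(A)`. -/
instance : TopologicalSpace ↥(Uinf A) :=
  ⨆ n, TopologicalSpace.coinduced (uLevel A n) inferInstance

lemma continuous_glLevel (n : ℕ) : Continuous (glLevel A n) :=
  continuous_iSup_rng continuous_coinduced_rng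

lemma continuous_uLevel (n : ℕ) : Continuous (uLevel A n) :=
  continuous_iSup_rng continuous_coinduced_rng

/-- The identity component `GL_∞⁰(A)` as a subgroup of `GL_∞(A)` (= the normal closure of the
connected component of the identity, which equals it). -/
def GLinf0 : Subgroup ↥(GLinf A) :=
  Subgroup.normalClosure (connectedComponent (1 : ↥(GLinf A)))

instance GLinf0_normal : (GLinf0 A).Normal := Subgroup.normalClosure_normal
/-- The identity component `U_∞⁰(A)` as a subgroup of `U_∞(A)`. -/
def Uinf0 : Subgroup ↥(Uinf A) :=
  Subgroup.normalClosure (connectedComponent (1 : ↥(Uinf A)))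

instance Uinf0_normal : (Uinf0 A).Normal := Subgroup.normalClosure_normal
/-- `CGL_∞(A)`: the closure of the derived subgroup of `GL_∞(A)` (as the normal closure of
the topological closure, which equals it). -/
def CGLinf : Subgroup ↥(GLinf A) :=
  Subgroup.normalClosure (closure ((commutator ↥(GLinf A) : Subgroup ↥(GLinf A)) : Set ↥(GLinf A)))

instance CGLinf_normal : (CGLinf A).Normal := Subgroup.normalClosure_normal
/-- `CU_∞(A)`. -/
def CUinf : Subgroup ↥(Uinf A) :=
  Subgroup.normalClosure (closure ((commutator ↥(Uinf A) : Subgroup ↥(Uinf A)) : Set ↥(Uinf A)))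

instance CUinf_normal : (CUinf A).Normal := Subgroup.normalClosure_normal
/-- The algebraic K₁-group `K₁^alg(A) = GL_∞(A)/DGL_∞(A)`. -/
abbrev K1alg := ↥(GLinf A) ⧸ commutator ↥(GLinf A)

/-- The unitary algebraic K₁-group `K₁^{alg,u}(A) = U_∞(A)/DU_∞(A)`. -/
abbrev K1algU := ↥(Uinf A) ⧸ commutator ↥(Uinf A)

/-- The Hausdorffized algebraic K₁-group `K̄₁^alg(A) = GL_∞(A)/CGL_∞(A)`, a topological
group with the quotient topology. -/
abbrev K1algBar := ↥(GLinf A) ⧸ CGLinf A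

/-- The Hausdorffized unitary algebraic K₁-group `K̄₁^{alg,u}(A) = U_∞(A)/CU_∞(A)`. -/
abbrev K1algUBar := ↥(Uinf A) ⧸ CUinf A

/-- `Δ̃(π₁(GL_∞⁰(A)))`: the subgroup of `A/cl[A,A]` generated by pre-determinants of
piecewise-smooth loops at any matrix level (any loop in `GL_∞⁰(A)` has image in some
`GL_m(A)` by compactness). -/
def loopSubInfGL : AddSubgroup (TrTarget A) := AddSubgroup.closure (⋃ n, loopSetGL A n)

/-- `Δ̃(π₁(U_∞⁰(A)))`. -/
def loopSubInfU : AddSubgroup (TrTarget A) := AddSubgroup.closure (⋃ n, loopSetU A n)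

/-- `ker Δ ⊆ GL_∞(A)` for the de la Harpe–Skandalis determinant on `GL_∞⁰(A)`. -/
def kerDetInfGL : Subgroup ↥(GLinf A) :=
  Subgroup.normalClosure
    {x : ↥(GLinf A) | ∃ (n : ℕ) (y : GLn A n) (ξ : ℝ → Mat A n), IsPWSmooth ξ ∧ ξ 0 = 1 ∧
      ξ 1 = Units.val y ∧ glLevel A n y = x ∧ predet A ξ ∈ loopSubInfGL A}

instance kerDetInfGL_normal : (kerDetInfGL A).Normal := Subgroup.normalClosure_normal
/-- `ker (Δ|_{U_∞⁰(A)}) ⊆ U_∞(A)`. -/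
def kerDetInfU : Subgroup ↥(Uinf A) :=
  Subgroup.normalClosure
    {u : ↥(Uinf A) | ∃ (n : ℕ) (v : Un A n) (ξ : ℝ → Mat A n), IsPWSmooth ξ ∧ ξ 0 = 1 ∧
      ξ 1 = Subtype.val v ∧ uLevel A n v = u ∧ predet A ξ ∈ loopSubInfGL A}

instance kerDetInfU_normal : (kerDetInfU A).Normal := Subgroup.normalClosure_normal
/-- `CGL_∞⁰(A)`: the closure of the derived subgroup of `GL_∞⁰(A)`. -/
def CGLinf0 : Subgroup ↥(GLinf A) :=
  Subgroup.normalClosure (closure ((⁅GLinf0 A, GLinf0 A⁆ : Subgroup ↥(GLinf A)) : Set ↥(GLinf A)))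

instance CGLinf0_normal : (CGLinf0 A).Normal := Subgroup.normalClosure_normal
/-- `CU_∞⁰(A)`. -/
def CUinf0 : Subgroup ↥(Uinf A) :=
  Subgroup.normalClosure (closure ((⁅Uinf0 A, Uinf0 A⁆ : Subgroup ↥(Uinf A)) : Set ↥(Uinf A)))

instance CUinf0_normal : (CUinf0 A).Normal := Subgroup.normalClosure_normal
/-- The codomain of the de la Harpe–Skandalis determinant on `GL_∞⁰(A)`. -/
abbrev DetTargetInf := TrTarget A ⧸ loopSubInfGL A

open scoped Classical in
/-- The de la Harpe–Skandalis determinant `Δ` on `GL_∞⁰(A)`: the class modulo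
`Δ̃(π₁(GL_∞⁰(A)))` of the pre-determinant of a (chosen) piecewise-smooth path from `1` to a
matrix-level representative (junk value `0` if there is none). -/
def DetInf (x : ↥(GLinf A)) : DetTargetInf A :=
  if h : ∃ (n : ℕ) (y : GLn A n) (ξ : ℝ → Mat A n), IsPWSmooth ξ ∧ ξ 0 = 1 ∧
      ξ 1 = Units.val y ∧ glLevel A n y = x
  then QuotientAddGroup.mk (predet A h.choose_spec.choose_spec.choose) else 0

end Limit

end PolarKTheory


namespace PolarKTheory

/-- `log |x|` via the continuous functional calculus: `log((x*x)^{1/2})`. -/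
noncomputable def logAbsCFC (B : Type*) [CStarAlgebra B] (x : B) : B :=
  cfc Real.log (cfc Real.sqrt (star x * x))

section FKauxSection
open NormedSpace intervalIntegral MeasureTheory

namespace FKaux

/-! clamp to `[0,1]` and scalar facts -/

def σ01 (s : ℝ) : ℝ := max 0 (min 1 s)

lemma σ01_nonneg (s : ℝ) : 0 ≤ σ01 s := le_max_left _ _
lemma σ01_le_one (s : ℝ) : σ01 s ≤ 1 := max_le zero_le_one (min_le_left _ _)
lemma σ01_eq {s : ℝ} (h0 : 0 ≤ s) (h1 : s ≤ 1) : σ01 s = s := by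
  simp [σ01, min_eq_right h1, max_eq_right h0]
lemma continuous_σ01 : Continuous σ01 := continuous_const.max (continuous_const.min continuous_id)

lemma den_pos {σ x : ℝ} (h0 : 0 ≤ σ) (h1 : σ ≤ 1) (hx : 0 < x) : 0 < 1 + σ * (x - 1) := by
  rcases h1.lt_or_eq with h | h
  · nlinarith [mul_nonneg h0 hx.le]
  · subst h; simpa using hx

lemma den_pos' (s : ℝ) {x : ℝ} (hx : 0 < x) : 0 < 1 + σ01 s * (x - 1) :=
  den_pos (σ01_nonneg s) (σ01_le_one s) hx

lemma scalar_log_integral {x : ℝ} (hx : 0 < x) :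
    (∫ s in (0:ℝ)..1, (x - 1) * (1 + σ01 s * (x - 1))⁻¹) = Real.log x := by
  have hcong : Set.EqOn (fun s => (x - 1) * (1 + σ01 s * (x - 1))⁻¹)
      (fun s => (x - 1) * (1 + s * (x - 1))⁻¹) (Set.uIcc (0:ℝ) 1) := by
    intro s hs
    rw [Set.uIcc_of_le (by norm_num : (0:ℝ) ≤ 1)] at hs
    simp [σ01_eq hs.1 hs.2]
  rw [intervalIntegral.integral_congr hcong]
  have hd : ∀ t ∈ Set.uIcc (0:ℝ) 1, HasDerivAt (fun s => Real.log (1 + s * (x - 1)))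
      ((x - 1) * (1 + t * (x - 1))⁻¹) t := by
    intro t ht
    rw [Set.uIcc_of_le (by norm_num : (0:ℝ) ≤ 1)] at ht
    have hpos : 0 < 1 + t * (x - 1) := den_pos ht.1 ht.2 hx
    have hu : HasDerivAt (fun s : ℝ => 1 + s * (x - 1)) (x - 1) t := by
      simpa using (hasDerivAt_mul_const (x - 1)).const_add 1
    have := (Real.hasDerivAt_log hpos.ne').comp t hu
    simpa [mul_comm, Function.comp_def] using this
  have hint : IntervalIntegrable (fun t => (x - 1) * (1 + t * (x - 1))⁻¹) volume 0 1 := by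
    apply ContinuousOn.intervalIntegrable
    intro t ht
    rw [Set.uIcc_of_le (by norm_num : (0:ℝ) ≤ 1)] at ht
    have hpos : 0 < 1 + t * (x - 1) := den_pos ht.1 ht.2 hx
    exact (continuousAt_const.mul (((continuous_const.add
      (continuous_id.mul continuous_const)).continuousAt).inv₀ hpos.ne')).continuousWithinAt
  rw [intervalIntegral.integral_eq_sub_of_hasDerivAt hd hint]
  norm_num

lemma scalar_inv_integral {x : ℝ} (hx : 0 < x) :
    (∫ s in (0:ℝ)..1, (1 + σ01 s * (x - 1))⁻¹ * (1 + σ01 s * (x - 1))⁻¹) = x⁻¹ := by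
  have hcong : Set.EqOn (fun s => (1 + σ01 s * (x - 1))⁻¹ * (1 + σ01 s * (x - 1))⁻¹)
      (fun s => (1 + s * (x - 1))⁻¹ * (1 + s * (x - 1))⁻¹) (Set.uIcc (0:ℝ) 1) := by
    intro s hs
    rw [Set.uIcc_of_le (by norm_num : (0:ℝ) ≤ 1)] at hs
    simp [σ01_eq hs.1 hs.2]
  rw [intervalIntegral.integral_congr hcong]
  rcases eq_or_ne x 1 with rfl | hne
  · simp
  · have hx1 : x - 1 ≠ 0 := sub_ne_zero.mpr hne
    have hd : ∀ t ∈ Set.uIcc (0:ℝ) 1, HasDerivAt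
        (fun s => -(x - 1)⁻¹ * (1 + s * (x - 1))⁻¹)
        ((1 + t * (x - 1))⁻¹ * (1 + t * (x - 1))⁻¹) t := by
      intro t ht
      rw [Set.uIcc_of_le (by norm_num : (0:ℝ) ≤ 1)] at ht
      have hpos : 0 < 1 + t * (x - 1) := den_pos ht.1 ht.2 hx
      have hu : HasDerivAt (fun s : ℝ => 1 + s * (x - 1)) (x - 1) t := by
        simpa using (hasDerivAt_mul_const (x - 1)).const_add 1
      have hinv := (hasDerivAt_inv hpos.ne').comp t hu
      have := hinv.const_mul (-(x - 1)⁻¹)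
      refine this.congr_deriv ?_
      have := hpos.ne'
      field_simp
    have hint : IntervalIntegrable
        (fun t => (1 + t * (x - 1))⁻¹ * (1 + t * (x - 1))⁻¹) volume 0 1 := by
      apply ContinuousOn.intervalIntegrable
      intro t ht
      rw [Set.uIcc_of_le (by norm_num : (0:ℝ) ≤ 1)] at ht
      have hpos : 0 < 1 + t * (x - 1) := den_pos ht.1 ht.2 hx
      have hc : ContinuousAt (fun s : ℝ => (1 + s * (x - 1))⁻¹) t :=
        ((continuous_const.add (continuous_id.mul continuous_const)).continuousAt).inv₀ hpos.ne'
      exact (hc.mul hc).continuousWithinAt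
    rw [intervalIntegral.integral_eq_sub_of_hasDerivAt hd hint]
    have hxne : x ≠ 0 := hx.ne'
    have e : (1:ℝ) + 1 * (x - 1) = x := by ring
    simp only [zero_mul, add_zero, inv_one, mul_one, e]
    field_simp
    ring

/-! C*-algebra preliminaries -/

variable {B : Type*} [CStarAlgebra B]

lemma spec_star_mul_self_pos {z : B} (hz : IsUnit z) :
    spectrum ℝ (star z * z) ⊆ Set.Ioi 0 := by
  letI := CStarAlgebra.spectralOrder B
  letI := CStarAlgebra.spectralOrderedRing B
  intro x hx
  have hu : IsUnit (star z * z) := (hz.star.mul hz)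
  have h0 : (0 : ℝ) ∉ spectrum ℝ (star z * z) := spectrum.zero_notMem ℝ hu
  have h1 : 0 ≤ x := spectrum_nonneg_of_nonneg (star_mul_self_nonneg z) hx
  rcases h1.lt_or_eq with h | h
  · exact h
  · exact absurd (h ▸ hx) h0

lemma ringInverse_eq {M : Type*} [MonoidWithZero M] {a x : M} (h1 : a * x = 1) (h2 : x * a = 1) :
    Ring.inverse a = x := by
  have : Ring.inverse ((⟨a, x, h1, h2⟩ : Mˣ) : M) = x := Ring.inverse_unit _
  simpa using this

variable {b : B}

lemma integral_cfcHom_eq (hsa : IsSelfAdjoint b) (f : ℝ → C(spectrum ℝ b, ℝ))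
    (hf : Continuous f) (g : C(spectrum ℝ b, ℝ))
    (h : ∀ x : spectrum ℝ b, (∫ s in (0:ℝ)..1, f s x) = g x) :
    (∫ s in (0:ℝ)..1, cfcHom hsa (f s)) = cfcHom hsa g := by
  let Φ : C(spectrum ℝ b, ℝ) →L[ℝ] B :=
    ⟨(cfcHom hsa).toAlgHom.toLinearMap, (cfcHom_isClosedEmbedding hsa).continuous⟩
  have hInt : IntervalIntegrable f volume 0 1 := hf.intervalIntegrable _ _
  have key : (∫ s in (0:ℝ)..1, Φ (f s)) = Φ (∫ s in (0:ℝ)..1, f s) :=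
    Φ.intervalIntegral_comp_comm hInt
  have : (∫ s in (0:ℝ)..1, f s) = g := by
    ext x
    have := (ContinuousMap.evalCLM (R := ℝ) x).intervalIntegral_comp_comm hInt
    rw [← h x]
    exact this.symm
  calc (∫ s in (0:ℝ)..1, cfcHom hsa (f s)) = Φ (∫ s in (0:ℝ)..1, f s) := key
    _ = cfcHom hsa g := by rw [this]; rfl

section opstuff

lemma spec_pos_val (hsp : spectrum ℝ b ⊆ Set.Ioi 0) (x : spectrum ℝ b) : 0 < (x : ℝ) :=
  hsp x.2

def denCM (s : ℝ) : C(spectrum ℝ b, ℝ) :=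
  ⟨fun x => 1 + σ01 s * ((x : ℝ) - 1), by fun_prop⟩

def denInvCM (hsp : spectrum ℝ b ⊆ Set.Ioi 0) (s : ℝ) : C(spectrum ℝ b, ℝ) :=
  ⟨fun x => (1 + σ01 s * ((x : ℝ) - 1))⁻¹, by
    apply Continuous.inv₀ (by fun_prop)
    exact fun x => (den_pos' s (spec_pos_val hsp x)).ne'⟩

lemma cfcHom_denCM (hsa : IsSelfAdjoint b) (s : ℝ) :
    cfcHom hsa (denCM (b := b) s) = 1 + σ01 s • (b - 1) := by
  have : denCM (b := b) s
      = (1 : C(spectrum ℝ b, ℝ)) + σ01 s • ((ContinuousMap.id ℝ).restrict (spectrum ℝ b) - 1) := by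
    ext x; simp [denCM]
  rw [this, map_add, map_one, _root_.map_smul, map_sub, map_one, cfcHom_id hsa]

lemma denCM_mul_denInvCM (hsp : spectrum ℝ b ⊆ Set.Ioi 0) (s : ℝ) :
    denCM (b := b) s * denInvCM hsp s = 1 := by
  ext x
  exact mul_inv_cancel₀ (den_pos' s (spec_pos_val hsp x)).ne'

lemma denInvCM_mul_denCM (hsp : spectrum ℝ b ⊆ Set.Ioi 0) (s : ℝ) :
    denInvCM hsp s * denCM (b := b) s = 1 := by
  ext x
  exact inv_mul_cancel₀ (den_pos' s (spec_pos_val hsp x)).ne'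

lemma cfcHom_denInvCM (hsa : IsSelfAdjoint b) (hsp : spectrum ℝ b ⊆ Set.Ioi 0) (s : ℝ) :
    cfcHom hsa (denInvCM hsp s) = Ring.inverse (1 + σ01 s • (b - 1)) := by
  symm
  apply ringInverse_eq
  · rw [← cfcHom_denCM hsa s, ← map_mul, denCM_mul_denInvCM hsp s, map_one]
  · rw [← cfcHom_denCM hsa s, ← map_mul, denInvCM_mul_denCM hsp s, map_one]

lemma isUnit_den (hsa : IsSelfAdjoint b) (hsp : spectrum ℝ b ⊆ Set.Ioi 0) (s : ℝ) :
    IsUnit (1 + σ01 s • (b - 1)) := by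
  rw [← cfcHom_denCM hsa s]
  apply IsUnit.map
  rw [isUnit_iff_exists]
  exact ⟨denInvCM hsp s, denCM_mul_denInvCM hsp s, denInvCM_mul_denCM hsp s⟩

lemma continuous_denInvCM (hsp : spectrum ℝ b ⊆ Set.Ioi 0) :
    Continuous (denInvCM hsp) := by
  apply ContinuousMap.continuous_of_continuous_uncurry
  apply Continuous.inv₀
  · exact continuous_const.add ((continuous_σ01.comp continuous_fst).mul
      ((continuous_subtype_val.comp continuous_snd).sub continuous_const))
  · rintro ⟨s, x⟩
    exact (den_pos' s (spec_pos_val hsp x)).ne'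

lemma log_eq_integral (hsa : IsSelfAdjoint b) (hsp : spectrum ℝ b ⊆ Set.Ioi 0) :
    cfc Real.log b = ∫ s in (0:ℝ)..1, (b - 1) * Ring.inverse (1 + σ01 s • (b - 1)) := by
  have hlogc : ContinuousOn Real.log (spectrum ℝ b) :=
    Real.continuousOn_log.mono (fun x hx => ne_of_gt (hsp hx))
  set f : ℝ → C(spectrum ℝ b, ℝ) :=
    fun s => ((ContinuousMap.id ℝ).restrict (spectrum ℝ b) - 1) * denInvCM hsp s with hf_def
  have hf : Continuous f := by
    apply continuous_const.mul (continuous_denInvCM hsp)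
  have hcfc : ∀ s, cfcHom hsa (f s) = (b - 1) * Ring.inverse (1 + σ01 s • (b - 1)) := by
    intro s
    rw [hf_def, map_mul, map_sub, map_one, cfcHom_id hsa, cfcHom_denInvCM hsa hsp s]
  have key := integral_cfcHom_eq hsa f hf ⟨_, hlogc.restrict⟩ ?_
  · rw [cfc_apply Real.log b hsa hlogc, ← key]
    exact intervalIntegral.integral_congr (fun s _ => hcfc s)
  · intro x
    have := scalar_log_integral (spec_pos_val hsp x)
    simpa [hf_def, denInvCM] using this

lemma ringInverse_eq_integral (hsa : IsSelfAdjoint b) (hsp : spectrum ℝ b ⊆ Set.Ioi 0) :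
    Ring.inverse b =
      ∫ s in (0:ℝ)..1,
        Ring.inverse (1 + σ01 s • (b - 1)) * Ring.inverse (1 + σ01 s • (b - 1)) := by
  have hinvc : Continuous (fun x : spectrum ℝ b => ((x : ℝ))⁻¹) := by
    apply Continuous.inv₀ (by fun_prop)
    exact fun x => (spec_pos_val hsp x).ne'
  set g : C(spectrum ℝ b, ℝ) := ⟨fun x => ((x : ℝ))⁻¹, hinvc⟩ with hg_def
  set f : ℝ → C(spectrum ℝ b, ℝ) := fun s => denInvCM hsp s * denInvCM hsp s with hf_def
  have hf : Continuous f := (continuous_denInvCM hsp).mul (continuous_denInvCM hsp)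
  have hcfc : ∀ s, cfcHom hsa (f s) =
      Ring.inverse (1 + σ01 s • (b - 1)) * Ring.inverse (1 + σ01 s • (b - 1)) := by
    intro s
    rw [hf_def, map_mul, cfcHom_denInvCM hsa hsp s]
  have hgmul : g * (ContinuousMap.id ℝ).restrict (spectrum ℝ b) = 1 := by
    ext x
    exact inv_mul_cancel₀ (spec_pos_val hsp x).ne'
  have hmulg : (ContinuousMap.id ℝ).restrict (spectrum ℝ b) * g = 1 := by
    ext x
    exact mul_inv_cancel₀ (spec_pos_val hsp x).ne'
  have hginv : cfcHom hsa g = Ring.inverse b := by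
    symm
    apply ringInverse_eq (x := cfcHom hsa g)
    · calc b * cfcHom hsa g
          = cfcHom hsa ((ContinuousMap.id ℝ).restrict (spectrum ℝ b)) * cfcHom hsa g := by
            rw [cfcHom_id hsa]
        _ = cfcHom hsa ((ContinuousMap.id ℝ).restrict (spectrum ℝ b) * g) := (map_mul _ _ _).symm
        _ = 1 := by rw [hmulg, map_one]
    · calc cfcHom hsa g * b
          = cfcHom hsa g * cfcHom hsa ((ContinuousMap.id ℝ).restrict (spectrum ℝ b)) := by
            rw [cfcHom_id hsa]
        _ = cfcHom hsa (g * (ContinuousMap.id ℝ).restrict (spectrum ℝ b)) := (map_mul _ _ _).symm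
        _ = 1 := by rw [hgmul, map_one]
  have key := integral_cfcHom_eq hsa f hf g ?_
  · rw [← hginv, ← key]
    exact intervalIntegral.integral_congr (fun s _ => hcfc s)
  · intro x
    have := scalar_inv_integral (spec_pos_val hsp x)
    simpa [hf_def, denInvCM, hg_def] using this

end opstuff

/-! the path `t ↦ (star y) * exp (t • H) * y` and its properties -/

section path
variable (y H : B)

def Epath (t : ℝ) : B := exp (t • H)
def cpath (t : ℝ) : B := star y * Epath H t * y
def vpath (t : ℝ) : B := star y * (H * Epath H t) * y
def upath (s t : ℝ) : B := 1 + σ01 s • (cpath y H t - 1)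
def Rres (s t : ℝ) : B := Ring.inverse (upath y H s t)

variable {y H}

lemma Epath_add (t u : ℝ) : Epath H (t + u) = Epath H t * Epath H u := by
  rw [Epath, Epath, Epath, add_smul]
  letI : NormedAlgebra ℚ B := .restrictScalars ℚ ℝ B
  exact exp_add_of_commute (((Commute.refl H).smul_left t).smul_right u)

@[simp] lemma Epath_zero : Epath H 0 = (1 : B) := by simp [Epath]

lemma Epath_sa (hH : IsSelfAdjoint H) (t : ℝ) : IsSelfAdjoint (Epath H t) := by
  have h : star (t • H) = t • H := (IsSelfAdjoint.smul (star_trivial t) hH).star_eq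
  rw [Epath, IsSelfAdjoint, star_exp, h]

lemma isUnit_Epath (t : ℝ) : IsUnit (Epath H t) := by
  letI : NormedAlgebra ℚ B := .restrictScalars ℚ ℝ B
  exact isUnit_exp _

lemma Epath_mul_Epath_neg (t : ℝ) : Epath H t * Epath H (-t) = 1 := by
  rw [← Epath_add]; simp

lemma Epath_neg_mul_Epath (t : ℝ) : Epath H (-t) * Epath H t = 1 := by
  rw [← Epath_add]; simp

lemma Epath_comm (hH : IsSelfAdjoint H) (t : ℝ) : H * Epath H t = Epath H t * H :=
  (((Commute.refl H).smul_right t).exp_right).eq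

lemma cpath_eq_star_mul_self (hH : IsSelfAdjoint H) (t : ℝ) :
    cpath y H t = star (Epath H (t/2) * y) * (Epath H (t/2) * y) := by
  calc cpath y H t = star y * Epath H t * y := rfl
    _ = star y * (Epath H (t/2) * Epath H (t/2)) * y := by rw [← Epath_add, add_halves]
    _ = star y * Epath H (t/2) * (Epath H (t/2) * y) := by noncomm_ring
    _ = star (Epath H (t/2) * y) * (Epath H (t/2) * y) := by
        rw [star_mul, (Epath_sa hH (t/2)).star_eq]

lemma cpath_sa (hH : IsSelfAdjoint H) (t : ℝ) : IsSelfAdjoint (cpath y H t) := by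
  rw [cpath_eq_star_mul_self hH t]; exact IsSelfAdjoint.star_mul_self _

lemma cpath_spec_pos (hy : IsUnit y) (hH : IsSelfAdjoint H) (t : ℝ) :
    spectrum ℝ (cpath y H t) ⊆ Set.Ioi 0 := by
  rw [cpath_eq_star_mul_self hH t]
  exact spec_star_mul_self_pos ((isUnit_Epath (t/2)).mul hy)

lemma isUnit_upath (hy : IsUnit y) (hH : IsSelfAdjoint H) (s t : ℝ) :
    IsUnit (upath y H s t) :=
  isUnit_den (cpath_sa hH t) (cpath_spec_pos hy hH t) s

lemma hasDerivAt_cpath (t : ℝ) : HasDerivAt (cpath y H) (vpath y H t) t := by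
  have h := (hasDerivAt_exp_smul_const' H t).const_mul (star y)
  exact h.mul_const y

lemma continuous_Epath : Continuous (Epath H) := by
  letI : NormedAlgebra ℚ B := .restrictScalars ℚ ℝ B
  exact exp_continuous.comp (continuous_id.smul continuous_const)

lemma continuous_cpath : Continuous (cpath y H) :=
  (continuous_const.mul continuous_Epath).mul continuous_const

lemma continuous_vpath : Continuous (vpath y H) :=
  (continuous_const.mul (continuous_const.mul continuous_Epath)).mul continuous_const

lemma continuous_upath : Continuous fun p : ℝ × ℝ => upath y H p.1 p.2 := by
  apply continuous_const.add
  exact ((continuous_σ01.comp continuous_fst).smul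
    (((continuous_cpath).comp continuous_snd).sub continuous_const))

lemma continuous_Rres (hy : IsUnit y) (hH : IsSelfAdjoint H) :
    Continuous fun p : ℝ × ℝ => Rres y H p.1 p.2 := by
  rw [continuous_iff_continuousAt]
  intro p
  have hu := isUnit_upath hy hH p.1 p.2
  have h1 : ContinuousAt Ring.inverse (upath y H p.1 p.2) := by
    have := NormedRing.inverse_continuousAt hu.unit
    rwa [hu.unit_spec] at this
  have heq : (fun p : ℝ × ℝ => Rres y H p.1 p.2)
      = Ring.inverse ∘ (fun p : ℝ × ℝ => upath y H p.1 p.2) := rfl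
  rw [heq]
  exact ContinuousAt.comp (f := fun p : ℝ × ℝ => upath y H p.1 p.2) h1
    (continuous_upath (y := y) (H := H)).continuousAt

lemma hasDerivAt_upath (s t : ℝ) :
    HasDerivAt (fun t => upath y H s t) (σ01 s • vpath y H t) t := by
  have h := (((hasDerivAt_cpath (y := y) (H := H) t).sub_const 1).const_smul (σ01 s)).const_add 1
  simpa [upath] using h

lemma hasDerivAt_Rres (hy : IsUnit y) (hH : IsSelfAdjoint H) (s t : ℝ) :
    HasDerivAt (fun t => Rres y H s t)
      (-(σ01 s • (Rres y H s t * vpath y H t * Rres y H s t))) t := by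
  have hu := isUnit_upath hy hH s t
  have hinv : Rres y H s t = (↑hu.unit⁻¹ : B) := by
    rw [Rres]
    conv_lhs => rw [← hu.unit_spec]
    rw [Ring.inverse_unit]
  have hfd := hasFDerivAt_ringInverse (𝕜 := ℝ) hu.unit
  rw [hu.unit_spec] at hfd
  have := hfd.comp_hasDerivAt t (hasDerivAt_upath s t)
  simp only [ContinuousLinearMap.neg_apply, ContinuousLinearMap.mulLeftRight_apply] at this
  rw [← hinv] at this
  simp only [mul_smul_comm, smul_mul_assoc] at this
  exact this

lemma Rres_sq (hy : IsUnit y) (hH : IsSelfAdjoint H) (s t : ℝ) :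
    Rres y H s t * Rres y H s t
      = Rres y H s t - σ01 s • (Rres y H s t * (cpath y H t - 1) * Rres y H s t) := by
  have h1 : Rres y H s t * upath y H s t = 1 :=
    Ring.inverse_mul_cancel _ (isUnit_upath hy hH s t)
  have h2 : Rres y H s t + σ01 s • (Rres y H s t * (cpath y H t - 1)) = 1 := by
    conv_rhs => rw [← h1]
    rw [upath, mul_add, mul_one, mul_smul_comm]
  have h3 : σ01 s • (Rres y H s t * (cpath y H t - 1)) = 1 - Rres y H s t :=
    eq_sub_of_add_eq' h2
  calc Rres y H s t * Rres y H s t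
      = Rres y H s t - (1 - Rres y H s t) * Rres y H s t := by noncomm_ring
    _ = Rres y H s t - σ01 s • (Rres y H s t * (cpath y H t - 1)) * Rres y H s t := by rw [h3]
    _ = Rres y H s t - σ01 s • (Rres y H s t * (cpath y H t - 1) * Rres y H s t) := by
        rw [smul_mul_assoc]

section trace
variable (T : B →L[ℝ] ℂ)

lemma trace_alg (htr : ∀ a b : B, T (a * b) = T (b * a)) (R v c : B) (r : ℝ)
    (hsq : R * R = R - r • (R * (c - 1) * R)) :
    T (R * R * v) = T (v * R + (c - 1) * -(r • (R * v * R))) := by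
  have e1 : T (v * R) = T (R * v) := htr v R
  have e2 : T ((c - 1) * (R * v * R)) = T (R * (c - 1) * R * v) := by
    have h := htr ((c - 1) * (R * v)) R
    simp only [mul_assoc] at h ⊢
    exact h
  have expand : (c - 1) * -(r • (R * v * R)) = -(r • ((c - 1) * (R * v * R))) := by
    rw [mul_neg, mul_smul_comm]
  rw [map_add, expand, map_neg, _root_.map_smul, e1, e2, hsq]
  simp only [sub_mul, smul_mul_assoc, map_sub, _root_.map_smul]
  ring

def gfun (s t : ℝ) : ℂ := T ((cpath y H t - 1) * Rres y H s t)
def Xfun (s t : ℝ) : ℂ := T (Rres y H s t * Rres y H s t * vpath y H t)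

lemma hasDerivAt_gfun (htr : ∀ a b : B, T (a * b) = T (b * a))
    (hy : IsUnit y) (hH : IsSelfAdjoint H) (s t : ℝ) :
    HasDerivAt (fun t => gfun (y := y) (H := H) T s t) (Xfun (y := y) (H := H) T s t) t := by
  have hmul : HasDerivAt (fun t => (cpath y H t - 1) * Rres y H s t)
      (vpath y H t * Rres y H s t
        + (cpath y H t - 1) * -(σ01 s • (Rres y H s t * vpath y H t * Rres y H s t))) t :=
    ((hasDerivAt_cpath t).sub_const 1).mul (hasDerivAt_Rres hy hH s t)
  have hT := T.hasFDerivAt.comp_hasDerivAt t hmul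
  exact hT.congr_deriv (trace_alg T htr _ _ _ _ (Rres_sq hy hH s t)).symm

lemma continuous_Xfun (hy : IsUnit y) (hH : IsSelfAdjoint H) :
    Continuous fun p : ℝ × ℝ => Xfun (y := y) (H := H) T p.1 p.2 :=
  T.continuous.comp (((continuous_Rres hy hH).mul (continuous_Rres hy hH)).mul
    (continuous_vpath.comp continuous_snd))

lemma continuous_gfun_s (hy : IsUnit y) (hH : IsSelfAdjoint H) (t : ℝ) :
    Continuous fun s => gfun (y := y) (H := H) T s t :=
  T.continuous.comp (continuous_const.mul
    ((continuous_Rres hy hH).comp (continuous_id.prodMk continuous_const)))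

lemma phi_eq (hy : IsUnit y) (hH : IsSelfAdjoint H) (t : ℝ) :
    T (cfc Real.log (cpath y H t)) = ∫ s in (0:ℝ)..1, gfun (y := y) (H := H) T s t := by
  have hint : IntervalIntegrable
      (fun s => (cpath y H t - 1) * Rres y H s t) volume 0 1 := by
    apply Continuous.intervalIntegrable
    exact continuous_const.mul
      ((continuous_Rres hy hH).comp (continuous_id.prodMk continuous_const))
  rw [log_eq_integral (cpath_sa hH t) (cpath_spec_pos hy hH t)]
  exact (T.intervalIntegral_comp_comm hint).symm

lemma ringInverse_cpath (w : Bˣ) (hH : IsSelfAdjoint H) (t : ℝ) :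
    Ring.inverse (cpath (↑w) H t) = ↑w⁻¹ * (Epath H (-t) * star (↑w⁻¹ : B)) := by
  apply ringInverse_eq
  · calc cpath (↑w) H t * (↑w⁻¹ * (Epath H (-t) * star (↑w⁻¹ : B)))
        = star (↑w : B) * (Epath H t * ((↑w * ↑w⁻¹ : B) * (Epath H (-t) * star (↑w⁻¹ : B)))) := by
          rw [cpath]; noncomm_ring
      _ = star (↑w : B) * ((Epath H t * Epath H (-t)) * star (↑w⁻¹ : B)) := by
          rw [Units.mul_inv, one_mul, mul_assoc]
      _ = star (↑w : B) * star (↑w⁻¹ : B) := by rw [Epath_mul_Epath_neg, one_mul]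
      _ = star ((↑w⁻¹ : B) * ↑w) := (star_mul _ _).symm
      _ = 1 := by rw [Units.inv_mul, star_one]
  · calc (↑w⁻¹ * (Epath H (-t) * star (↑w⁻¹ : B))) * cpath (↑w) H t
        = ↑w⁻¹ * (Epath H (-t) * ((star (↑w⁻¹ : B) * star (↑w : B)) * (Epath H t * ↑w))) := by
          rw [cpath]; noncomm_ring
      _ = ↑w⁻¹ * ((Epath H (-t) * Epath H t) * ↑w) := by
          rw [← star_mul, Units.mul_inv, star_one, one_mul, mul_assoc]
      _ = ↑w⁻¹ * ↑w := by rw [Epath_neg_mul_Epath, one_mul]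
      _ = 1 := Units.inv_mul w

lemma T_invc_mul_v (htr : ∀ a b : B, T (a * b) = T (b * a)) (w : Bˣ)
    (hH : IsSelfAdjoint H) (t : ℝ) :
    T (Ring.inverse (cpath (↑w) H t) * vpath (↑w) H t) = T H := by
  rw [ringInverse_cpath w hH t]
  have e1 : (↑w⁻¹ * (Epath H (-t) * star (↑w⁻¹ : B))) * vpath (↑w) H t
      = ↑w⁻¹ * (Epath H (-t) * ((star (↑w⁻¹ : B) * star (↑w : B)) * ((H * Epath H t) * ↑w))) := by
    rw [vpath]; noncomm_ring
  rw [e1, ← star_mul, Units.mul_inv, star_one, one_mul]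
  have e2 : Epath H (-t) * (H * Epath H t * ↑w) = H * ↑w := by
    rw [← mul_assoc, ← mul_assoc, ← Epath_comm hH (-t), mul_assoc H, Epath_neg_mul_Epath, mul_one]
  rw [e2, htr (↑w⁻¹ : B) (H * ↑w), mul_assoc, Units.mul_inv, mul_one]

lemma integral_Xfun (htr : ∀ a b : B, T (a * b) = T (b * a)) (w : Bˣ)
    (hH : IsSelfAdjoint H) (t : ℝ) :
    (∫ s in (0:ℝ)..1, Xfun (y := (↑w : B)) (H := H) T s t) = T H := by
  set M : B →L[ℝ] ℂ := T.comp ((ContinuousLinearMap.mul ℝ B).flip (vpath (↑w) H t)) with hM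
  have hXM : ∀ s, Xfun (y := (↑w : B)) (H := H) T s t
      = M (Rres (↑w) H s t * Rres (↑w) H s t) := fun s => rfl
  have hint : IntervalIntegrable (fun s => Rres (↑w : B) H s t * Rres (↑w) H s t) volume 0 1 := by
    apply Continuous.intervalIntegrable
    have hc := (continuous_Rres (y := (↑w : B)) (H := H) w.isUnit hH).comp
      (continuous_id.prodMk (continuous_const : Continuous fun _ : ℝ => t))
    exact hc.mul hc
  calc (∫ s in (0:ℝ)..1, Xfun (y := (↑w : B)) (H := H) T s t)
      = ∫ s in (0:ℝ)..1, M (Rres (↑w) H s t * Rres (↑w) H s t) := by simp_rw [hXM]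
    _ = M (∫ s in (0:ℝ)..1, Rres (↑w) H s t * Rres (↑w) H s t) :=
        M.intervalIntegral_comp_comm hint
    _ = M (∫ s in (0:ℝ)..1, Ring.inverse (1 + σ01 s • (cpath (↑w : B) H t - 1))
            * Ring.inverse (1 + σ01 s • (cpath (↑w : B) H t - 1))) := rfl
    _ = M (Ring.inverse (cpath (↑w) H t)) := by
        rw [← ringInverse_eq_integral (cpath_sa hH t) (cpath_spec_pos w.isUnit hH t)]
    _ = T (Ring.inverse (cpath (↑w) H t) * vpath (↑w) H t) := rfl
    _ = T H := T_invc_mul_v T htr w hH t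

lemma key_conj (htr : ∀ a b : B, T (a * b) = T (b * a)) (w : Bˣ)
    {P : B} (hP : IsSelfAdjoint P) (hsp : spectrum ℝ P ⊆ Set.Ioi 0) :
    T (cfc Real.log (star (↑w : B) * P * ↑w))
      = T (cfc Real.log (star (↑w : B) * ↑w)) + T (cfc Real.log P) := by
  have hy : IsUnit (↑w : B) := w.isUnit
  set H : B := cfc Real.log P with hH_def
  have hH : IsSelfAdjoint H := cfc_predicate Real.log P
  have hEP : Epath H 1 = P := by
    rw [Epath, one_smul]
    letI := CStarAlgebra.spectralOrder B
    letI := CStarAlgebra.spectralOrderedRing B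
    exact CFC.exp_log P ((StarOrderedRing.isStrictlyPositive_iff_spectrum_pos P hP).mpr
      (fun x hx => hsp hx))
  have hc1 : cpath (↑w : B) H 1 = star (↑w : B) * P * ↑w := by rw [cpath, hEP]
  have hc0 : cpath (↑w : B) H 0 = star (↑w : B) * ↑w := by
    rw [cpath, Epath_zero, mul_one]
  have hXc : Continuous fun p : ℝ × ℝ => Xfun (y := (↑w : B)) (H := H) T p.1 p.2 :=
    continuous_Xfun T hy hH
  have hFTC : ∀ s, (∫ t in (0:ℝ)..1, Xfun (y := (↑w : B)) (H := H) T s t)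
      = gfun (y := (↑w : B)) (H := H) T s 1 - gfun (y := (↑w : B)) (H := H) T s 0 := by
    intro s
    apply intervalIntegral.integral_eq_sub_of_hasDerivAt
    · exact fun t _ => hasDerivAt_gfun T htr hy hH s t
    · exact (hXc.comp (continuous_const.prodMk continuous_id)).intervalIntegrable 0 1
  have hgint : ∀ t, IntervalIntegrable
      (fun s => gfun (y := (↑w : B)) (H := H) T s t) volume 0 1 :=
    fun t => (continuous_gfun_s T hy hH t).intervalIntegrable 0 1
  have step1 : T (cfc Real.log (cpath (↑w : B) H 1)) - T (cfc Real.log (cpath (↑w : B) H 0))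
      = ∫ s in (0:ℝ)..1,
          (gfun (y := (↑w : B)) (H := H) T s 1 - gfun (y := (↑w : B)) (H := H) T s 0) := by
    rw [phi_eq T hy hH 1, phi_eq T hy hH 0,
      ← intervalIntegral.integral_sub (hgint 1) (hgint 0)]
  have step2 : (∫ s in (0:ℝ)..1,
        (gfun (y := (↑w : B)) (H := H) T s 1 - gfun (y := (↑w : B)) (H := H) T s 0))
      = ∫ s in (0:ℝ)..1, ∫ t in (0:ℝ)..1, Xfun (y := (↑w : B)) (H := H) T s t :=
    intervalIntegral.integral_congr (fun s _ => (hFTC s).symm)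
  have swap : (∫ s in (0:ℝ)..1, ∫ t in (0:ℝ)..1, Xfun (y := (↑w : B)) (H := H) T s t)
      = ∫ t in (0:ℝ)..1, ∫ s in (0:ℝ)..1, Xfun (y := (↑w : B)) (H := H) T s t := by
    have hInt : Integrable (Function.uncurry fun s t => Xfun (y := (↑w : B)) (H := H) T s t)
        ((volume.restrict (Set.Ioc (0:ℝ) 1)).prod (volume.restrict (Set.Ioc (0:ℝ) 1))) := by
      rw [Measure.prod_restrict]
      exact ((hXc.continuousOn).integrableOn_compact (isCompact_Icc.prod isCompact_Icc)).mono_set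
        (Set.prod_mono Set.Ioc_subset_Icc_self Set.Ioc_subset_Icc_self)
    simp_rw [intervalIntegral.integral_of_le (zero_le_one' ℝ)]
    exact MeasureTheory.integral_integral_swap hInt
  have step3 : (∫ t in (0:ℝ)..1, ∫ s in (0:ℝ)..1, Xfun (y := (↑w : B)) (H := H) T s t)
      = T H := by
    rw [intervalIntegral.integral_congr (g := fun _ : ℝ => T H)
      (fun t _ => integral_Xfun T htr w hH t)]
    simp
  have final := step1.trans (step2.trans (swap.trans step3))
  rw [hc1, hc0] at final
  linear_combination final

end trace
end path

/-! final reduction -/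

lemma logAbs_eq_half {x : B} (hx : IsUnit x) :
    cfc Real.log (cfc Real.sqrt (star x * x)) = (2⁻¹ : ℝ) • cfc Real.log (star x * x) := by
  have hsa : IsSelfAdjoint (star x * x) := IsSelfAdjoint.star_mul_self x
  have hsp : spectrum ℝ (star x * x) ⊆ Set.Ioi 0 := spec_star_mul_self_pos hx
  have hlog : ContinuousOn Real.log (Real.sqrt '' spectrum ℝ (star x * x)) := by
    apply Real.continuousOn_log.mono
    rintro - ⟨z, hz, rfl⟩
    exact (Real.sqrt_pos.mpr (hsp hz)).ne'
  have hsqrt : ContinuousOn Real.sqrt (spectrum ℝ (star x * x)) :=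
    Real.continuous_sqrt.continuousOn
  rw [← cfc_comp' Real.log Real.sqrt (star x * x) hlog hsqrt hsa]
  have hcongr : ∀ z ∈ spectrum ℝ (star x * x), Real.log (Real.sqrt z) = 2⁻¹ * Real.log z := by
    intro z hz
    rw [Real.log_sqrt (hsp hz).le]
    ring
  calc cfc (fun z => Real.log (Real.sqrt z)) (star x * x)
      = cfc (fun z => 2⁻¹ * Real.log z) (star x * x) := cfc_congr hcongr
    _ = (2⁻¹ : ℝ) • cfc Real.log (star x * x) :=
        cfc_const_mul (2⁻¹ : ℝ) Real.log (star x * x)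
          (Real.continuousOn_log.mono (fun z hz => (hsp hz).ne'))

lemma final_reduction (T : B →L[ℝ] ℂ) (htr : ∀ a b : B, T (a * b) = T (b * a))
    {x y : B} (hx : IsUnit x) (hy : IsUnit y) :
    T (cfc Real.log (cfc Real.sqrt (star (x * y) * (x * y))))
      = T (cfc Real.log (cfc Real.sqrt (star x * x)))
        + T (cfc Real.log (cfc Real.sqrt (star y * y))) := by
  have hxy : IsUnit (x * y) := hx.mul hy
  rw [logAbs_eq_half hxy, logAbs_eq_half hx, logAbs_eq_half hy,
    _root_.map_smul, _root_.map_smul, _root_.map_smul]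
  have hP : IsSelfAdjoint (star x * x) := IsSelfAdjoint.star_mul_self x
  have hsp : spectrum ℝ (star x * x) ⊆ Set.Ioi 0 := spec_star_mul_self_pos hx
  have hstar : star (x * y) * (x * y) = star y * (star x * x) * y := by
    rw [star_mul]; noncomm_ring
  have hkey := key_conj T htr hy.unit hP hsp
  rw [hy.unit_spec] at hkey
  rw [hstar, hkey, smul_add]
  ring

end FKaux
end FKauxSection

/-- For invertible `x, y` in a unital C*-algebra `B` and any tracial state
`τ`, `τ(log|xy|) = τ(log|x|) + τ(log|y|)`. -/
theorem tracial_state_log_abs_multiplicative (B : Type*) [CStarAlgebra B]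
    (x y : B) (hx : IsUnit x) (hy : IsUnit y) (τ : TracialState B) :
    τ.toFun (logAbsCFC B (x * y)) = τ.toFun (logAbsCFC B x) + τ.toFun (logAbsCFC B y) := by
  have htr : ∀ a b : B, (τ.toFun.restrictScalars ℝ) (a * b) = (τ.toFun.restrictScalars ℝ) (b * a) :=
    fun a b => τ.tracial' a b
  exact FKaux.final_reduction (τ.toFun.restrictScalars ℝ) htr hx hy

end PolarKTheory
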